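/- arXiv:2010.07499 — 2 statements merged into one kernel-verified Lean document; each statement's English description precedes it below -/
import Mathlib

section
/- If L is a linear subspace of ℚ^n, then the image exp(L ⊗_ℚ ℂ) under the coordinatewise exponential map exp: ℂ^n → (ℂ^×)^n is an algebraic subtorus of (ℂ^×)^n; conversely, every algebraic subtorus T ⊆ (ℂ^×)^n equals exp(L ⊗_ℚ ℂ) for some linear subspace L ⊆ ℚ^n. -/
/-- The monomial map `(Kˣ)ᵐ → (Kˣ)ⁿ` determined by an integer matrix `A`. -/
def monomialMap {K : Type} [Field K] {m n : ℕ} (A : Matrix (Fin n) (Fin m) ℤ)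
    (x : Fin m → Kˣ) : Fin n → Kˣ :=
  fun i => ∏ j, x j ^ A i j

/-- An algebraic subtorus of `(Kˣ)ⁿ`: the image of a monomial embedding `(Kˣ)ᵐ ↪ (Kˣ)ⁿ` whose
dual lattice map `ℤᵐ → ℤⁿ` has primitive image (i.e. `ℤⁿ` modulo the image is torsion-free). -/
def IsSubtorus {K : Type} [Field K] {n : ℕ} (T : Set (Fin n → Kˣ)) : Prop :=
  ∃ (m : ℕ) (A : Matrix (Fin n) (Fin m) ℤ),
    Function.Injective (monomialMap (K := K) A) ∧
    (∀ (v : Fin n → ℤ) (k : ℤ), k ≠ 0 →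
      k • v ∈ LinearMap.range (Matrix.mulVecLin A) →
      v ∈ LinearMap.range (Matrix.mulVecLin A)) ∧
    T = Set.range (monomialMap (K := K) A)

/-- The coordinatewise exponential map `ℂⁿ → (ℂˣ)ⁿ`. -/
noncomputable def expTorus {n : ℕ} (z : Fin n → ℂ) : Fin n → ℂˣ :=
  fun i => Units.mk0 (Complex.exp (z i)) (Complex.exp_ne_zero _)

/-- The complexification `L ⊗_ℚ ℂ ⊆ ℂⁿ` of a linear subspace `L ⊆ ℚⁿ`. -/
noncomputable def ratComplexify {n : ℕ} (L : Submodule ℚ (Fin n → ℚ)) : Submodule ℂ (Fin n → ℂ) :=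
  Submodule.span ℂ ((fun (v : Fin n → ℚ) (i : Fin n) => ((v i : ℂ))) '' (L : Set (Fin n → ℚ)))

/-!
Let `Λ = L ∩ ℤⁿ` and let `A` be the integer matrix whose columns form a ℤ-basis of `Λ`. For any
integer matrix `A`, the monomial map satisfies `monomialMap A ∘ exp = exp ∘ A`, and `exp` is
surjective, so its image is `exp` of the complex column span of `A`, i.e. of the complexification
of the rational column span; this gives the converse, and for our `A` the rational column span is
`L` (clear denominators). `Λ` is primitive because `L` is a ℚ-subspace. For injectivity, if
`exp (A w) = exp (A w')` then `A (w - w') = 2πi k` with `k ∈ ℤⁿ`; as `(L ⊗ ℂ) ∩ ℚⁿ = L`, `k` lies in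
`Λ = A ℤᵐ`, and since the columns of `A` stay independent over `ℂ`, `w - w' ∈ 2πi ℤᵐ`.
-/

open Matrix Complex

lemma Matrix.map_intCast_mulVec {R : Type*} [Ring R] {m n : ℕ} (A : Matrix (Fin n) (Fin m) ℤ)
    (v : Fin m → ℤ) :
    A.map (Int.cast : ℤ → R) *ᵥ (fun j => (v j : R)) = fun i => ((A *ᵥ v) i : R) :=
  funext fun i => (RingHom.map_mulVec (Int.castRingHom R) A v i).symm

lemma Matrix.map_ratCast_mulVec {R : Type*} [DivisionRing R] [CharZero R] {m n : ℕ}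
    (B : Matrix (Fin n) (Fin m) ℚ) (v : Fin m → ℚ) :
    B.map (Rat.cast : ℚ → R) *ᵥ (fun j => (v j : R)) = fun i => ((B *ᵥ v) i : R) :=
  funext fun i => (RingHom.map_mulVec (Rat.castHom R) B v i).symm

lemma Matrix.mulVec_map_algebraMap_injective {R S : Type*} [CommRing R] [CommRing S] [Algebra R S]
    [FaithfulSMul R S] [IsDomain S] {m n : Type*} [Fintype m] [Finite n] {A : Matrix n m R}
    (hA : Function.Injective A.mulVec) : Function.Injective (A.map (algebraMap R S)).mulVec := by
  rw [mulVec_injective_iff] at hA ⊢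
  exact linearIndependent_algebraMap_comp_iff.mpr hA

section BasisMatrix

variable {R : Type*} [CommRing R] {m n : ℕ} {M : Submodule R (Fin n → R)}

lemma Matrix.range_mulVecLin_of_basis (b : Module.Basis (Fin m) R M) :
    LinearMap.range (Matrix.of fun i j => (b j : Fin n → R) i).mulVecLin = M := by
  rw [range_mulVecLin]
  change Submodule.span R (Set.range (M.subtype ∘ b)) = M
  rw [Set.range_comp, ← Submodule.map_span, b.span_eq, Submodule.map_top, Submodule.range_subtype]

lemma Matrix.mulVec_injective_of_basis (b : Module.Basis (Fin m) R M) :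
    Function.Injective (Matrix.of fun i j => (b j : Fin n → R) i).mulVec :=
  mulVec_injective_iff.mpr (b.linearIndependent.map' M.subtype M.ker_subtype)

end BasisMatrix

lemma Submodule.exists_matrix_ker_eq {K : Type*} [Field K] {n : ℕ} (L : Submodule K (Fin n → K)) :
    ∃ (k : ℕ) (B : Matrix (Fin k) (Fin n) K), LinearMap.ker B.mulVecLin = L := by
  let f := (Module.finBasis K ((Fin n → K) ⧸ L)).equivFun.toLinearMap ∘ₗ L.mkQ
  refine ⟨_, LinearMap.toMatrix' f, ?_⟩
  rw [← Matrix.toLin'_apply', Matrix.toLin'_toMatrix', LinearEquiv.ker_comp, Submodule.ker_mkQ]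

lemma exists_intCast_eq_smul {ι : Type*} [Finite ι] (v : ι → ℚ) :
    ∃ d : ℤ, d ≠ 0 ∧ ∃ e : ι → ℤ, (fun i => (e i : ℚ)) = (d : ℚ) • v := by
  obtain ⟨d, hd⟩ := IsLocalization.exist_integer_multiples_of_finite (nonZeroDivisors ℤ) v
  choose e he using hd
  refine ⟨d, nonZeroDivisors.coe_ne_zero d, e, funext fun i => ?_⟩
  simpa [zsmul_eq_mul] using he i

lemma expTorus_surjective {n : ℕ} : Function.Surjective (expTorus (n := n)) :=
  fun u => ⟨fun i => log (u i), funext fun i => Units.ext (exp_log (u i).ne_zero)⟩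

lemma expTorus_eq_expTorus_iff {n : ℕ} {z w : Fin n → ℂ} :
    expTorus z = expTorus w ↔ ∃ k : Fin n → ℤ, z = w + (2 * Real.pi * I) • fun i => (k i : ℂ) := by
  simp only [funext_iff, expTorus, Units.ext_iff, Units.val_mk0, exp_eq_exp_iff_exists_int,
    Pi.add_apply, Pi.smul_apply, smul_eq_mul, mul_comm (2 * (Real.pi : ℂ) * I)]
  exact Classical.skolem

lemma monomialMap_expTorus {m n : ℕ} (A : Matrix (Fin n) (Fin m) ℤ) (w : Fin m → ℂ) :
    monomialMap A (expTorus w) = expTorus (A.map (Int.cast : ℤ → ℂ) *ᵥ w) := by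
  ext i
  simp only [monomialMap, expTorus, Units.coe_prod, Units.val_zpow_eq_zpow_val, Units.val_mk0,
    mulVec, dotProduct, map_apply, exp_sum, exp_int_mul]

lemma range_monomialMap {m n : ℕ} (A : Matrix (Fin n) (Fin m) ℤ) :
    Set.range (monomialMap (K := ℂ) A) =
      expTorus '' LinearMap.range (A.map (Int.cast : ℤ → ℂ)).mulVecLin := by
  rw [← expTorus_surjective.range_comp, LinearMap.coe_range, ← Set.range_comp]
  exact congrArg Set.range (funext (monomialMap_expTorus A))

lemma ratComplexify_span {n : ℕ} (s : Set (Fin n → ℚ)) :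
    ratComplexify (Submodule.span ℚ s) = Submodule.span ℂ ((fun v i => (v i : ℂ)) '' s) := by
  change Submodule.span ℂ (((Algebra.linearMap ℚ ℂ).compLeft (Fin n)) '' _) = _
  rw [← Submodule.map_coe, Submodule.map_span, Submodule.span_span_of_tower]
  rfl

lemma range_mulVecLin_map_intCast {m n : ℕ} (A : Matrix (Fin n) (Fin m) ℤ) :
    LinearMap.range (A.map (Int.cast : ℤ → ℂ)).mulVecLin =
      ratComplexify (LinearMap.range (A.map (Int.cast : ℤ → ℚ)).mulVecLin) := by
  rw [range_mulVecLin, range_mulVecLin, ratComplexify_span, ← Set.range_comp]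
  congr 2

lemma ratComplexify_le_ker {m n : ℕ} (B : Matrix (Fin n) (Fin m) ℚ) :
    ratComplexify (LinearMap.ker B.mulVecLin) ≤
      LinearMap.ker (B.map (Rat.cast : ℚ → ℂ)).mulVecLin := by
  rw [ratComplexify, Submodule.span_le]
  rintro _ ⟨v, hv, rfl⟩
  simp_all [map_ratCast_mulVec, funext_iff]

lemma ratCast_mem_ratComplexify_iff {n : ℕ} {L : Submodule ℚ (Fin n → ℚ)} {q : Fin n → ℚ} :
    (fun i => (q i : ℂ)) ∈ ratComplexify L ↔ q ∈ L := by
  refine ⟨fun h => ?_, fun h => Submodule.subset_span ⟨q, h, rfl⟩⟩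
  obtain ⟨k, B, rfl⟩ := L.exists_matrix_ker_eq
  have := ratComplexify_le_ker B h
  simp_all [map_ratCast_mulVec, funext_iff]

def integerPoints {n : ℕ} (L : Submodule ℚ (Fin n → ℚ)) : Submodule ℤ (Fin n → ℤ) :=
  (L.restrictScalars ℤ).comap ((Algebra.linearMap ℤ ℚ).compLeft (Fin n))

@[simp] lemma mem_integerPoints {n : ℕ} {L : Submodule ℚ (Fin n → ℚ)} {v : Fin n → ℤ} :
    v ∈ integerPoints L ↔ (fun i => (v i : ℚ)) ∈ L :=
  Iff.rfl

lemma smul_mem_integerPoints_iff {n : ℕ} {L : Submodule ℚ (Fin n → ℚ)} {v : Fin n → ℤ} {k : ℤ}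
    (hk : k ≠ 0) : k • v ∈ integerPoints L ↔ v ∈ integerPoints L := by
  have : (fun i => ((k • v) i : ℚ)) = (k : ℚ) • fun i => (v i : ℚ) := by ext; simp
  rw [mem_integerPoints, mem_integerPoints, this, L.smul_mem_iff (Int.cast_ne_zero.mpr hk)]

lemma range_mulVecLin_map_intCast_of_eq_integerPoints {m n : ℕ} {L : Submodule ℚ (Fin n → ℚ)}
    {A : Matrix (Fin n) (Fin m) ℤ} (hA : LinearMap.range A.mulVecLin = integerPoints L) :
    LinearMap.range (A.map (Int.cast : ℤ → ℚ)).mulVecLin = L := by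
  refine le_antisymm ?_ fun v hv => ?_
  · rw [range_mulVecLin, Submodule.span_le]
    rintro _ ⟨j, rfl⟩
    have hj : A *ᵥ Pi.single j 1 ∈ integerPoints L := hA ▸ ⟨_, rfl⟩
    simp only [mem_integerPoints, mulVec_single_one] at hj
    exact hj
  · obtain ⟨d, hd, e, he⟩ := exists_intCast_eq_smul v
    have heL : e ∈ integerPoints L := by
      rw [mem_integerPoints, he]
      exact L.smul_mem _ hv
    obtain ⟨c, hc⟩ : e ∈ LinearMap.range A.mulVecLin := hA ▸ heL
    refine ⟨(d : ℚ)⁻¹ • fun j => (c j : ℚ), ?_⟩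
    rw [mulVecLin_apply, mulVec_smul, map_intCast_mulVec, ← mulVecLin_apply, hc, he,
      inv_smul_smul₀ (Int.cast_ne_zero.mpr hd)]

lemma monomialMap_injective_of_range_eq {m n : ℕ} {L : Submodule ℚ (Fin n → ℚ)}
    {A : Matrix (Fin n) (Fin m) ℤ} (hA : Function.Injective (A.map (Int.cast : ℤ → ℂ)).mulVec)
    (hAL : LinearMap.range A.mulVecLin = integerPoints L) :
    Function.Injective (monomialMap (K := ℂ) A) := by
  have hAC : LinearMap.range (A.map (Int.cast : ℤ → ℂ)).mulVecLin = ratComplexify L := by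
    rw [range_mulVecLin_map_intCast, range_mulVecLin_map_intCast_of_eq_integerPoints hAL]
  intro x y hxy
  obtain ⟨w, rfl⟩ := expTorus_surjective x
  obtain ⟨w', rfl⟩ := expTorus_surjective y
  rw [monomialMap_expTorus, monomialMap_expTorus, expTorus_eq_expTorus_iff] at hxy
  obtain ⟨k, hk⟩ := hxy
  have h2πI : (2 * Real.pi * I : ℂ) ≠ 0 := by simp [Real.pi_ne_zero, I_ne_zero]
  have hkC : (fun i => ((k i : ℚ) : ℂ)) ∈ ratComplexify L := by
    rw [← hAC]
    refine ⟨(2 * Real.pi * I : ℂ)⁻¹ • (w - w'), ?_⟩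
    rw [mulVecLin_apply, mulVec_smul, mulVec_sub, hk, add_sub_cancel_left, inv_smul_smul₀ h2πI]
    simp
  obtain ⟨c, rfl⟩ : k ∈ LinearMap.range A.mulVecLin :=
    hAL ▸ mem_integerPoints.mpr (ratCast_mem_ratComplexify_iff.mp hkC)
  rw [expTorus_eq_expTorus_iff]
  refine ⟨c, hA ?_⟩
  rw [mulVec_add, mulVec_smul, map_intCast_mulVec]
  exact hk

theorem isSubtorus_expTorus_image_ratComplexify {n : ℕ} (L : Submodule ℚ (Fin n → ℚ)) :
    IsSubtorus (expTorus '' (ratComplexify L : Set (Fin n → ℂ))) := by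
  obtain ⟨m, b⟩ := Submodule.basisOfPid (Pi.basisFun ℤ (Fin n)) (integerPoints L)
  have hAL := range_mulVecLin_of_basis b
  have hA : Function.Injective ((Matrix.of fun i j => (b j : Fin n → ℤ) i).map
      (Int.cast : ℤ → ℂ)).mulVec :=
    mulVec_map_algebraMap_injective (mulVec_injective_of_basis b)
  refine ⟨m, _, monomialMap_injective_of_range_eq hA hAL, fun v k hk => ?_, ?_⟩
  · rw [hAL]
    exact (smul_mem_integerPoints_iff hk).mp
  · rw [range_monomialMap, range_mulVecLin_map_intCast,
      range_mulVecLin_map_intCast_of_eq_integerPoints hAL]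

theorem exists_eq_expTorus_image_of_isSubtorus {n : ℕ} {T : Set (Fin n → ℂˣ)}
    (hT : IsSubtorus T) :
    ∃ L : Submodule ℚ (Fin n → ℚ), T = expTorus '' (ratComplexify L : Set (Fin n → ℂ)) := by
  obtain ⟨m, A, -, -, rfl⟩ := hT
  exact ⟨_, by rw [range_monomialMap, range_mulVecLin_map_intCast]⟩

/-- If `L` is a linear subspace of `ℚⁿ`, then `exp(L ⊗_ℚ ℂ)` is an algebraic
subtorus of `(ℂˣ)ⁿ`; conversely, every algebraic subtorus `T ⊆ (ℂˣ)ⁿ` equals `exp(L ⊗_ℚ ℂ)`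
for some linear subspace `L ⊆ ℚⁿ`. -/
theorem exp_rational_subspace_subtorus {n : ℕ} :
    (∀ L : Submodule ℚ (Fin n → ℚ),
      IsSubtorus (expTorus '' ((ratComplexify L : Set (Fin n → ℂ))))) ∧
    (∀ T : Set (Fin n → ℂˣ), IsSubtorus T →
      ∃ L : Submodule ℚ (Fin n → ℚ),
        T = expTorus '' ((ratComplexify L : Set (Fin n → ℂ)))) :=
  ⟨isSubtorus_expTorus_image_ratComplexify, fun _ => exists_eq_expTorus_image_of_isSubtorus⟩
end

section
/- Let G be a group with a homomorphism χ: G → ℝ. The Novikov–Sikorav completion, consisting of all formal sums Σ n_g g ∈ ℤ^G such that for every c ∈ ℝ the set {g ∈ G : n_g ≠ 0 and χ(g) ≥ c} is finite, is closed under the convolution product (Σ n_g g)·(Σ m_h h) = Σ n_g m_h (gh), and forms a ring containing ℤG as a subring. -/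
/-!
A set `A ⊆ G` with only finitely many elements above each level of `χ` has `χ` bounded above
on it. So if `A` and `B` are such sets and `χ(a) + χ(b) ≥ c` with `a ∈ A`, `b ∈ B`, both
`χ(a)` and `χ(b)` are bounded below, leaving only finitely many pairs `(a, b)`. This gives both
the finiteness of each convolution coefficient and the finiteness condition for `A * B`, which
contains the support of the product.
-/

/-- The Novikov–Sikorav completion of `ℤG` with respect to `χ : G → ℝ`: all formal sums
`Σ n_g g ∈ ℤ^G` such that for every `c ∈ ℝ` the set `{g : n_g ≠ 0 and χ(g) ≥ c}` is finite. -/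
def NovikovSet {G : Type} [Group G] (χ : G → ℝ) : Set (G → ℤ) :=
  {f | ∀ c : ℝ, {g : G | f g ≠ 0 ∧ c ≤ χ g}.Finite}

open Classical in
/-- The convolution product `(Σ n_g g)·(Σ m_h h) = Σ n_g m_h (gh)` of formal sums (with junk
value `0` in each coefficient whose defining family is not finitely supported). -/
noncomputable def conv {G : Type} [Group G] (f h : G → ℤ) : G → ℤ :=
  fun x => ∑ᶠ p : G × G, if p.1 * p.2 = x then f p.1 * h p.2 else 0

open Function Pointwise

section FiniteAbove

variable {G : Type*} (χ : G → ℝ)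

def FiniteAbove (A : Set G) : Prop :=
  ∀ c : ℝ, {g ∈ A | c ≤ χ g}.Finite

variable {χ}

theorem Set.Finite.finiteAbove {A : Set G} (hA : A.Finite) : FiniteAbove χ A :=
  fun _ => hA.subset fun _ hg => hg.1

theorem FiniteAbove.mono {A B : Set G} (hB : FiniteAbove χ B) (hAB : A ⊆ B) :
    FiniteAbove χ A :=
  fun c => (hB c).subset fun _ hg => ⟨hAB hg.1, hg.2⟩

theorem FiniteAbove.exists_le {A : Set G} (hA : FiniteAbove χ A) : ∃ M, ∀ g ∈ A, χ g ≤ M := by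
  obtain ⟨M, hM⟩ := ((hA 0).image χ).bddAbove
  refine ⟨max 0 M, fun g hg => ?_⟩
  rcases le_or_gt 0 (χ g) with hg0 | hg0
  · exact le_max_of_le_right (hM ⟨g, ⟨hg, hg0⟩, rfl⟩)
  · exact le_max_of_le_left hg0.le

variable [Mul G]

theorem FiniteAbove.finite_pairs_le_mul (hχ : ∀ a b : G, χ (a * b) = χ a + χ b)
    {A B : Set G} (hA : FiniteAbove χ A) (hB : FiniteAbove χ B) (c : ℝ) :
    {p : G × G | p.1 ∈ A ∧ p.2 ∈ B ∧ c ≤ χ (p.1 * p.2)}.Finite := by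
  obtain ⟨MA, hMA⟩ := hA.exists_le
  obtain ⟨MB, hMB⟩ := hB.exists_le
  refine ((hA (c - MB)).prod (hB (c - MA))).subset ?_
  rintro ⟨a, b⟩ ⟨ha, hb, hc⟩
  rw [hχ] at hc
  have ha_le := hMA a ha
  have hb_le := hMB b hb
  exact ⟨⟨ha, by linarith⟩, ⟨hb, by linarith⟩⟩

theorem FiniteAbove.finite_mul_eq (hχ : ∀ a b : G, χ (a * b) = χ a + χ b)
    {A B : Set G} (hA : FiniteAbove χ A) (hB : FiniteAbove χ B) (x : G) :
    {p : G × G | p.1 * p.2 = x ∧ p.1 ∈ A ∧ p.2 ∈ B}.Finite :=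
  (hA.finite_pairs_le_mul hχ hB (χ x)).subset fun _ ⟨hx, ha, hb⟩ => ⟨ha, hb, hx ▸ le_rfl⟩

theorem FiniteAbove.mul (hχ : ∀ a b : G, χ (a * b) = χ a + χ b)
    {A B : Set G} (hA : FiniteAbove χ A) (hB : FiniteAbove χ B) : FiniteAbove χ (A * B) := by
  intro c
  refine ((hA.finite_pairs_le_mul hχ hB c).image fun p => p.1 * p.2).subset ?_
  rintro _ ⟨⟨a, ha, b, hb, rfl⟩, hc⟩
  exact ⟨(a, b), ⟨ha, hb, hc⟩, rfl⟩

end FiniteAbove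

section Convolution

variable {G : Type} [Group G]

theorem mem_novikovSet_iff {χ : G → ℝ} {f : G → ℤ} :
    f ∈ NovikovSet χ ↔ FiniteAbove χ (support f) :=
  Iff.rfl

theorem support_conv_subset (f h : G → ℤ) : support (conv f h) ⊆ support f * support h := by
  classical
  intro x hx
  obtain ⟨⟨a, b⟩, hab⟩ : ∃ p : G × G, (if p.1 * p.2 = x then f p.1 * h p.2 else 0) ≠ 0 := by
    by_contra! hzero
    exact hx (finsum_eq_zero_of_forall_eq_zero hzero)
  by_cases hx : a * b = x
  · rw [if_pos hx] at hab
    exact ⟨a, left_ne_zero_of_mul hab, b, right_ne_zero_of_mul hab, hx⟩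
  · exact absurd (if_neg hx) hab

theorem conv_coeff_eq_coeff_mul (a b : MonoidAlgebra ℤ G) :
    conv (fun g => a.coeff g) (fun g => b.coeff g) = fun g => (a * b).coeff g := by
  classical
  funext x
  have hsupp : (support fun p : G × G => if p.1 * p.2 = x then a.coeff p.1 * b.coeff p.2 else 0)
      ⊆ ↑(a.coeff.support ×ˢ b.coeff.support) := by
    intro p hp
    by_cases hx : p.1 * p.2 = x
    · rw [mem_support, if_pos hx] at hp
      simpa using ⟨left_ne_zero_of_mul hp, right_ne_zero_of_mul hp⟩
    · exact absurd (if_neg hx) hp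
  show (∑ᶠ p : G × G, _) = _
  rw [finsum_eq_finsetSum_of_support_subset _ hsupp, Finset.sum_product, MonoidAlgebra.coeff_mul]
  simp [Finsupp.sum]

end Convolution

/-- For a group `G` with a homomorphism `χ : G → ℝ`, the Novikov–Sikorav
completion is closed under the convolution product -- which is well-defined, each coefficient
being a finite sum -- and forms a ring containing the group ring `ℤG` (the finitely supported
formal sums, with its usual product) as a subring. -/
theorem novikov_sikorav_ring {G : Type} [Group G] (χ : G → ℝ)
    (hχ : ∀ a b : G, χ (a * b) = χ a + χ b) :
    (∀ f h, f ∈ NovikovSet χ → h ∈ NovikovSet χ →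
      ∀ x : G, {p : G × G | p.1 * p.2 = x ∧ f p.1 ≠ 0 ∧ h p.2 ≠ 0}.Finite) ∧
    (∀ f h, f ∈ NovikovSet χ → h ∈ NovikovSet χ → conv f h ∈ NovikovSet χ) ∧
    (∀ f : G → ℤ, (Function.support f).Finite → f ∈ NovikovSet χ) ∧
    (∀ a b : MonoidAlgebra ℤ G,
      conv (fun g => a.coeff g) (fun g => b.coeff g) = fun g => (a * b : MonoidAlgebra ℤ G).coeff g) := by
  refine ⟨fun f h hf hh x => ?_, fun f h hf hh => ?_, fun f hf => hf.finiteAbove,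
    conv_coeff_eq_coeff_mul⟩
  · exact FiniteAbove.finite_mul_eq hχ hf hh x
  · rw [mem_novikovSet_iff] at hf hh ⊢
    exact (hf.mul hχ hh).mono (support_conv_subset f h)
end
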